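/- arXiv:1809.02086 — 2 statements merged into one kernel-verified Lean document; each statement's English description precedes it below -/
import Mathlib

section
/- Let α ∈ (0,1) be irrational with best approximation denominators q_n and let ω(θ, m) = Σ_{i=1}^m z_i(θ), where z_i(θ) = ±1 according to whether {θ + iα} lies in [0,1/2) or [1/2,1). If ω(0, q_n) = 0, then for every θ ∈ [0,1), ω(θ, q_n) ∈ {0, 2, -2}. -/
/-- The ±1 coding of the rotation orbit: `1` if `{θ + iα} ∈ [0,1/2)`, `-1` otherwise. -/
noncomputable def zCode (α θ : ℝ) (i : ℕ) : ℤ :=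
  if Int.fract (θ + i * α) < 1 / 2 then 1 else -1

/-- The deterministic walk `ω(θ, m) = Σ_{i=1}^m z_i(θ)`. -/
noncomputable def walk (α θ : ℝ) (m : ℕ) : ℤ :=
  ∑ i ∈ Finset.Icc 1 m, zCode α θ i

/-!
Every `z_i` is odd, so `ω(0, q) = 0` forces `q = 2k`. For the convergent denominator `q`
write `q α = p + δ` with `p` coprime to `q` and `0 < |δ| < 1/q`. Then
`⌊q {i α}⌋ ≡ i p + ⌊δ⌋ (mod q)`, so the `q` points `{i α}`, `1 ≤ i ≤ q`, lie one in each open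
slot `(s/q, (s+1)/q)`. The square wave `f` with `z_i(θ) = f (θ + i α)` changes sign under
`x ↦ x + 1/2`, so the points of the opposite slots `s` and `s + k` contribute `f a - f b` for two
points `a, b` of the shifted slot `θ + (s/q, (s+1)/q)`; this vanishes unless that slot contains a
point of `ℤ/2`. The `k` shifted slots with `s < k` are disjoint subintervals of `(θ, θ + 1/2)`,
so at most one of them does, and `ω(θ, q) ∈ {0, ±2}`.
-/

open Finset Set

noncomputable def squareWave (x : ℝ) : ℤ := if Int.fract x < 1 / 2 then 1 else -1

namespace squareWave

theorem eq_one_or_eq_neg_one (x : ℝ) : squareWave x = 1 ∨ squareWave x = -1 := by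
  unfold squareWave; split_ifs <;> simp

theorem add_intCast (x : ℝ) (m : ℤ) : squareWave (x + m) = squareWave x := by
  simp only [squareWave, Int.fract_add_intCast]

theorem eq_ite_even_floor (x : ℝ) : squareWave x = if Even ⌊2 * x⌋ then 1 else -1 := by
  have hsplit : ⌊2 * x⌋ = ⌊2 * Int.fract x⌋ + 2 * ⌊x⌋ := by
    rw [← Int.floor_add_intCast, Int.fract]
    push_cast
    ring_nf
  have h0 := Int.fract_nonneg x
  have h1 := Int.fract_lt_one x
  unfold squareWave
  by_cases h : Int.fract x < 1 / 2
  · have : ⌊2 * Int.fract x⌋ = 0 := Int.floor_eq_zero_iff.mpr ⟨by linarith, by linarith⟩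
    rw [if_pos h, hsplit, this]; simp
  · have : ⌊2 * Int.fract x⌋ = 1 :=
      Int.floor_eq_iff.mpr ⟨by push_cast; linarith, by push_cast; linarith⟩
    rw [if_neg h, hsplit, this]; simp [Int.even_add]

theorem add_half (x : ℝ) : squareWave (x + 1 / 2) = -squareWave x := by
  have : ⌊2 * (x + 1 / 2)⌋ = ⌊2 * x⌋ + 1 := by
    rw [← Int.floor_add_one]; ring_nf
  simp only [eq_ite_even_floor, this, Int.even_add_one]
  split_ifs <;> simp

theorem eq_of_floor_two_mul_eq {x y : ℝ} (h : ⌊2 * x⌋ = ⌊2 * y⌋) :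
    squareWave x = squareWave y := by
  rw [eq_ite_even_floor, eq_ite_even_floor, h]

theorem sub_eq_zero_or_two_or_neg_two (x y : ℝ) :
    squareWave x - squareWave y = 0 ∨ squareWave x - squareWave y = 2 ∨
      squareWave x - squareWave y = -2 := by
  rcases eq_one_or_eq_neg_one x with h | h <;> rcases eq_one_or_eq_neg_one y with h' | h' <;>
    rw [h, h'] <;> norm_num

end squareWave

theorem zCode_eq_squareWave (α θ : ℝ) (i : ℕ) : zCode α θ i = squareWave (θ + i * α) :=
  rfl

theorem even_walk_sub (α θ : ℝ) (m : ℕ) : Even (walk α θ m - m) := by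
  have hsum : walk α θ m - m = ∑ i ∈ Finset.Icc 1 m, (zCode α θ i - 1) := by
    rw [sum_sub_distrib, sum_const, Nat.card_Icc, walk, nsmul_one, Nat.add_sub_cancel]
  rw [hsum]
  refine Finset.even_sum _ fun i _ ↦ ?_
  unfold zCode
  split_ifs <;> decide

theorem exists_intCast_mem_Ioo_of_floor_ne {u v x y : ℝ} (hx : x ∈ Ioo u v) (hy : y ∈ Ioo u v)
    (h : ⌊x⌋ ≠ ⌊y⌋) : ∃ m : ℤ, (m : ℝ) ∈ Ioo u v := by
  wlog hlt : ⌊x⌋ < ⌊y⌋ generalizing x y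
  · exact this hy hx h.symm (lt_of_le_of_ne (not_lt.mp hlt) h.symm)
  exact ⟨⌊y⌋, hx.1.trans (Int.floor_lt.mp hlt), (Int.floor_le y).trans_lt hy.2⟩

theorem eq_of_intCast_mem_Ioo_add_div {k s s' : ℕ} (hs : s < k) (hs' : s' < k) {t : ℝ}
    {m m' : ℤ}
    (hm : (m : ℝ) ∈ Ioo (t + s / k) (t + (s + 1) / k))
    (hm' : (m' : ℝ) ∈ Ioo (t + s' / k) (t + (s' + 1) / k)) : s = s' := by
  have hk : (0 : ℝ) < k := by exact_mod_cast (Nat.zero_le s).trans_lt hs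
  have hmem : ∀ {j : ℕ}, j < k → ∀ {x : ℝ}, x ∈ Ioo (t + j / k) (t + (j + 1) / k) →
      t < x ∧ x < t + 1 ∧ (j : ℝ) < k * (x - t) ∧ k * (x - t) < j + 1 := by
    intro j hj x ⟨h1, h2⟩
    have hj1 : (j : ℝ) + 1 ≤ k := by exact_mod_cast hj
    have h1' : (j : ℝ) < k * (x - t) := by rw [← div_lt_iff₀' hk]; linarith
    have h2' : k * (x - t) < j + 1 := by rw [← lt_div_iff₀' hk]; linarith
    refine ⟨?_, ?_, h1', h2'⟩ <;> nlinarith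
  obtain ⟨hm1, hm2, h1, h2⟩ := hmem hs hm
  obtain ⟨hm1', hm2', h1', h2'⟩ := hmem hs' hm'
  obtain rfl : m = m' := by
    have : (m : ℝ) < m' + 1 ∧ (m' : ℝ) < m + 1 := ⟨by linarith, by linarith⟩
    have : m < m' + 1 ∧ m' < m + 1 := by exact_mod_cast this
    omega
  have : (s : ℝ) < s' + 1 ∧ (s' : ℝ) < s + 1 := ⟨by linarith, by linarith⟩
  have : s < s' + 1 ∧ s' < s + 1 := by exact_mod_cast this
  omega

theorem sum_eq_zero_or_two_or_neg_two {ι : Type*} (S : Finset ι) (f : ι → ℤ)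
    (hf : ∀ i ∈ S, f i = 0 ∨ f i = 2 ∨ f i = -2)
    (huniq : ∀ i ∈ S, ∀ j ∈ S, f i ≠ 0 → f j ≠ 0 → i = j) :
    ∑ i ∈ S, f i = 0 ∨ ∑ i ∈ S, f i = 2 ∨ ∑ i ∈ S, f i = -2 := by
  by_cases h : ∃ i ∈ S, f i ≠ 0
  · obtain ⟨i, hi, hfi⟩ := h
    rw [sum_eq_single_of_mem i hi fun j hj hji ↦
      by_contra fun hfj ↦ hji (huniq j hj i hi hfj hfi)]
    exact hf i hi
  · push Not at h
    exact Or.inl (sum_eq_zero h)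

theorem sum_squareWave_of_mem_slots (k : ℕ) (y : ℕ → ℝ)
    (hy : ∀ s < 2 * k, y s ∈ Ioo ((s : ℝ) / (2 * k)) ((s + 1) / (2 * k))) (θ : ℝ) :
    ∑ s ∈ range (2 * k), squareWave (θ + y s) = 0 ∨
      ∑ s ∈ range (2 * k), squareWave (θ + y s) = 2 ∨
      ∑ s ∈ range (2 * k), squareWave (θ + y s) = -2 := by
  rw [two_mul, sum_range_add, ← sum_add_distrib]
  -- Shifting the point of slot `k + s` back by `1/2` lands it in slot `s` and flips its sign.
  have hpair : ∀ s < k,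
      2 * (θ + y s) ∈ Ioo (2 * θ + s / k) (2 * θ + (s + 1) / k) ∧
      2 * (θ + y (k + s) - 1 / 2) ∈ Ioo (2 * θ + s / k) (2 * θ + (s + 1) / k) ∧
      squareWave (θ + y s) + squareWave (θ + y (k + s)) =
        squareWave (θ + y s) - squareWave (θ + y (k + s) - 1 / 2) := by
    intro s hs
    have hk : (k : ℝ) ≠ 0 := by exact_mod_cast (Nat.zero_lt_of_lt hs).ne'
    obtain ⟨h1, h2⟩ := hy s (by omega)
    obtain ⟨h3, h4⟩ := hy (k + s) (by omega)
    have e1 : ((k + s : ℕ) : ℝ) / (2 * k) = 1 / 2 + s / (2 * k) := by field_simp; push_cast; ring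
    have e2 : ((k + s : ℕ) + 1 : ℝ) / (2 * k) = 1 / 2 + (s + 1) / (2 * k) := by
      field_simp; push_cast; ring
    have e3 : ∀ x : ℝ, 2 * θ + x / k = 2 * (θ + x / (2 * k)) := fun x ↦ by ring
    rw [e1] at h3
    rw [e2] at h4
    have hflip : squareWave (θ + y (k + s)) = -squareWave (θ + y (k + s) - 1 / 2) := by
      rw [← squareWave.add_half, sub_add_cancel]
    rw [e3, e3, hflip, ← sub_eq_add_neg]
    exact ⟨⟨by linarith, by linarith⟩, ⟨by linarith, by linarith⟩, rfl⟩
  apply sum_eq_zero_or_two_or_neg_two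
  · intro s hs
    rw [(hpair s (mem_range.mp hs)).2.2]
    exact squareWave.sub_eq_zero_or_two_or_neg_two _ _
  · have hjump : ∀ s ∈ range k, squareWave (θ + y s) + squareWave (θ + y (k + s)) ≠ 0 →
        ∃ m : ℤ, (m : ℝ) ∈ Ioo (2 * θ + s / k) (2 * θ + (s + 1) / k) := by
      intro s hs hne
      obtain ⟨ha, hb, heq⟩ := hpair s (mem_range.mp hs)
      rw [heq, sub_ne_zero] at hne
      exact exists_intCast_mem_Ioo_of_floor_ne ha hb (mt squareWave.eq_of_floor_two_mul_eq hne)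
    intro s hs s' hs' hne hne'
    obtain ⟨m, hm⟩ := hjump s hs hne
    obtain ⟨m', hm'⟩ := hjump s' hs' hne'
    exact eq_of_intCast_mem_Ioo_add_div (mem_range.mp hs) (mem_range.mp hs') hm hm'

namespace GenContFract

variable {K : Type*} [Field K] [LinearOrder K] [FloorRing K]

theorem exists_int_eq_contsAux (v : K) (n : ℕ) :
    ∃ a b : ℤ, (GenContFract.of v).contsAux n = ⟨a, b⟩ := by
  induction n using Nat.twoStepInduction with
  | zero => exact ⟨1, 0, by simp [contsAux]⟩
  | one => exact ⟨⌊v⌋, 1, by simp [contsAux, of_h_eq_floor]⟩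
  | more n ih₁ ih₂ =>
    obtain ⟨a, b, hab⟩ := ih₁
    obtain ⟨a', b', hab'⟩ := ih₂
    cases hgp : (GenContFract.of v).s.get? n with
    | none => exact ⟨a', b', (contsAux_stable_step_of_terminated hgp).trans hab'⟩
    | some gp =>
      obtain ⟨hgpa, z, hz⟩ := of_partNum_eq_one_and_exists_int_partDen_eq hgp
      refine ⟨z * a' + a, z * b' + b, ?_⟩
      rw [contsAux_recurrence hgp hab hab', hgpa, hz]
      congr 1 <;> push_cast <;> ring

theorem exists_int_eq_nums_and_dens (v : K) (n : ℕ) :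
    ∃ a b : ℤ, (GenContFract.of v).nums n = a ∧ (GenContFract.of v).dens n = b := by
  obtain ⟨a, b, h⟩ := exists_int_eq_contsAux v (n + 1)
  exact ⟨a, b, congrArg Pair.a h, congrArg Pair.b h⟩

theorem isCoprime_of_nums_eq_of_dens_eq {v : K} {n : ℕ}
    (hnt : ¬(GenContFract.of v).TerminatedAt n) {a b : ℤ}
    (ha : (GenContFract.of v).nums n = a) (hb : (GenContFract.of v).dens n = b) :
    IsCoprime a b := by
  obtain ⟨a', b', ha', hb'⟩ := exists_int_eq_nums_and_dens v (n + 1)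
  have hdet := SimpContFract.determinant (s := ⟨GenContFract.of v, of_isSimpContFract v⟩) hnt
  simp only [ha, hb, ha', hb'] at hdet
  have hdet' : a * b' - b * a' = (-1) ^ (n + 1) := by exact_mod_cast hdet
  rcases neg_one_pow_eq_or ℤ (n + 1) with h | h <;> rw [h] at hdet'
  · exact ⟨b', -a', by linear_combination hdet'⟩
  · exact ⟨-b', a', by linear_combination -hdet'⟩

variable [IsStrictOrderedRing K]

theorem one_le_dens (v : K) (n : ℕ) : 1 ≤ (GenContFract.of v).dens n := by
  rw [← zeroth_den_eq_one (g := GenContFract.of v)]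
  exact monotone_nat_of_le_succ (f := (GenContFract.of v).dens) (fun _ ↦ of_den_mono)
    (Nat.zero_le n)

end GenContFract

open GenContFract in
theorem Irrational.exists_isCoprime_abs_mul_sub_lt {α : ℝ} (hα : Irrational α) (n : ℕ) {q : ℕ}
    (hq : (q : ℝ) = (GenContFract.of α).dens n) :
    ∃ p : ℤ, IsCoprime p q ∧ |q * α - p| < 1 / q := by
  have hnt : ¬(GenContFract.of α).TerminatedAt n := fun h ↦
    hα.ne_rat _ (exists_rat_eq_of_terminates ⟨n, h⟩).choose_spec
  obtain ⟨p, b, hp, hb⟩ := exists_int_eq_nums_and_dens α n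
  obtain ⟨-, b', -, hb'⟩ := exists_int_eq_nums_and_dens α (n + 1)
  obtain rfl : (q : ℤ) = b := by exact_mod_cast hq.trans hb
  refine ⟨p, isCoprime_of_nums_eq_of_dens_eq hnt hp hb, ?_⟩
  have hq1 : (1 : ℝ) ≤ q := hq ▸ one_le_dens α n
  have hqb' : (q : ℝ) ≤ b' := by rw [hq, ← hb']; exact of_den_mono
  have happrox := abs_sub_convs_le hnt
  rw [conv_eq_num_div_den, hp, ← hq, hb'] at happrox
  have hq0 : (0 : ℝ) < q := by linarith
  have hle : |q * α - p| ≤ 1 / q := calc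
    |q * α - p| = |q * (α - p / q)| := by congr 1; field_simp
    _ = q * |α - p / q| := by rw [abs_mul, abs_of_pos hq0]
    _ ≤ q * (1 / (q * b')) := by gcongr
    _ = 1 / b' := by field_simp
    _ ≤ 1 / q := by gcongr
  refine hle.lt_of_ne fun h ↦ ?_
  have hirr : Irrational (q * α - p) :=
    (hα.natCast_mul (by rintro rfl; simp at hq0)).sub_intCast p
  rcases abs_choice (q * α - p) with h' | h' <;> rw [h'] at h
  · exact hirr.ne_rat (1 / q) (by push_cast; exact h)
  · exact hirr.ne_rat (-(1 / q)) (by push_cast; linarith)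

theorem mem_Ioo_floor_mul_div {q : ℕ} (hq : q ≠ 0) {x : ℝ} (hx : 0 ≤ x)
    (hirr : Irrational (q * x)) :
    x ∈ Ioo ((⌊q * x⌋₊ : ℝ) / q) ((⌊q * x⌋₊ + 1) / q) := by
  have hq' : (0 : ℝ) < q := by positivity
  have hlt : (⌊q * x⌋₊ : ℝ) < q * x :=
    (Nat.floor_le (by positivity)).lt_of_ne (hirr.ne_nat _).symm
  rw [Set.mem_Ioo, div_lt_iff₀' hq', lt_div_iff₀' hq']
  exact ⟨hlt, Nat.lt_floor_add_one _⟩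

theorem floor_natCast_mul_eq_floor {δ : ℝ} {i : ℕ} (hi : 1 ≤ i) (h : |i * δ| < 1) :
    ⌊i * δ⌋ = ⌊δ⌋ := by
  have hi' : (1 : ℝ) ≤ i := by exact_mod_cast hi
  rw [abs_lt] at h
  rcases le_or_gt 0 δ with hδ | hδ
  · rw [Int.floor_eq_zero_iff.mpr ⟨by positivity, by nlinarith⟩,
      Int.floor_eq_zero_iff.mpr ⟨hδ, by nlinarith⟩]
  · have h1 : ⌊i * δ⌋ = -1 := Int.floor_eq_iff.mpr ⟨by push_cast; linarith, by push_cast; nlinarith⟩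
    have h2 : ⌊δ⌋ = -1 := Int.floor_eq_iff.mpr ⟨by push_cast; nlinarith, by push_cast; linarith⟩
    rw [h1, h2]

section Slots

variable {α : ℝ} {q : ℕ} {p : ℤ}

theorem natCast_floor_mul_fract_eq (happ : |q * α - p| < 1 / q) {i : ℕ} (hi : i ∈ Finset.Icc 1 q) :
    (⌊q * Int.fract (i * α)⌋₊ : ℤ) = i * p - q * ⌊i * α⌋ + ⌊q * α - p⌋ := by
  obtain ⟨hi1, hiq⟩ := Finset.mem_Icc.mp hi
  have hq : (0 : ℝ) < q := by exact_mod_cast hi1.trans hiq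
  have hsmall : |i * (q * α - p)| < 1 := by
    rw [abs_mul, Nat.abs_cast]
    calc (i : ℝ) * |q * α - p| ≤ q * |q * α - p| := by gcongr
      _ < q * (1 / q) := by gcongr
      _ = 1 := by field_simp
  have hsplit : q * Int.fract (i * α) = i * (q * α - p) + ((i * p - q * ⌊i * α⌋ : ℤ) : ℝ) := by
    rw [Int.fract]; push_cast; ring
  rw [Int.natCast_floor_eq_floor (by positivity), hsplit, Int.floor_add_intCast,
    floor_natCast_mul_eq_floor hi1 hsmall]
  ring

theorem injOn_floor_mul_fract (hcop : IsCoprime p q) (happ : |q * α - p| < 1 / q) :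
    InjOn (fun i : ℕ ↦ ⌊q * Int.fract (i * α)⌋₊) (Finset.Icc 1 q : Finset ℕ) := by
  intro i hi j hj hij
  have hij' := congrArg (fun n : ℕ ↦ (n : ℤ)) hij
  simp only [natCast_floor_mul_fract_eq happ hi, natCast_floor_mul_fract_eq happ hj] at hij'
  have hdvd : (q : ℤ) ∣ (i - j) * p := ⟨⌊i * α⌋ - ⌊j * α⌋, by linear_combination hij'⟩
  obtain ⟨hi1, hiq⟩ := Finset.mem_Icc.mp hi
  obtain ⟨hj1, hjq⟩ := Finset.mem_Icc.mp hj
  have hlt : |(i - j : ℤ)| < q := by rw [abs_lt]; constructor <;> omega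
  have := Int.eq_zero_of_abs_lt_dvd (hcop.symm.dvd_of_dvd_mul_right hdvd) hlt
  omega

theorem exists_walk_eq_sum_squareWave_slots (hα : Irrational α) (hcop : IsCoprime p q)
    (happ : |q * α - p| < 1 / q) :
    ∃ y : ℕ → ℝ, (∀ s < q, y s ∈ Ioo ((s : ℝ) / q) ((s + 1) / q)) ∧
      ∀ θ, walk α θ q = ∑ s ∈ range q, squareWave (θ + y s) := by
  have hq0 : (0 : ℝ) < q := one_div_pos.mp ((abs_nonneg _).trans_lt happ)
  have hq : q ≠ 0 := by exact_mod_cast hq0.ne'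
  set σ : ℕ → ℕ := fun i ↦ ⌊q * Int.fract (i * α)⌋₊
  have hslot : ∀ i ∈ Finset.Icc 1 q, Int.fract (i * α) ∈ Ioo ((σ i : ℝ) / q) ((σ i + 1) / q) := by
    intro i hi
    have hi0 : i ≠ 0 := by have := (Finset.mem_Icc.mp hi).1; omega
    exact mem_Ioo_floor_mul_div hq (Int.fract_nonneg _)
      (((hα.natCast_mul hi0).sub_intCast _).natCast_mul hq)
  have hmaps : MapsTo σ (Finset.Icc 1 q : Finset ℕ) (range q : Finset ℕ) := by
    intro i hi
    simp only [coe_range, Set.mem_Iio, σ]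
    exact (Nat.floor_lt (by positivity)).mpr (mul_lt_of_lt_one_right hq0 (Int.fract_lt_one _))
  have hinj : InjOn σ (Finset.Icc 1 q : Finset ℕ) := injOn_floor_mul_fract hcop happ
  have hsurj := surjOn_of_injOn_of_card_le σ hmaps hinj (by simp)
  set τ := Function.invFunOn σ (Finset.Icc 1 q : Finset ℕ)
  refine ⟨fun s ↦ Int.fract (τ s * α), fun s hs ↦ ?_, fun θ ↦ ?_⟩
  · have hs' := hsurj (mem_range.mpr hs)
    have := hslot (τ s) (Function.invFunOn_mem hs')
    rwa [Function.invFunOn_eq hs'] at this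
  · refine sum_nbij σ hmaps hinj hsurj fun i hi ↦ ?_
    change _ = squareWave (θ + Int.fract (τ (σ i) * α))
    have hτ : τ (σ i) = i := hinj.leftInvOn_invFunOn hi
    rw [hτ, zCode_eq_squareWave, eq_comm, ← squareWave.add_intCast _ ⌊(i : ℝ) * α⌋, add_assoc,
      Int.fract_add_floor]

end Slots

theorem walk_translation_even_case_general (α : ℝ) (hα : Irrational α) (n : ℕ) (qn : ℕ)
    (hqn : (qn : ℝ) = (GenContFract.of α).dens n)
    (h0 : walk α 0 qn = 0) (θ : ℝ) :
    walk α θ qn = 0 ∨ walk α θ qn = 2 ∨ walk α θ qn = -2 := by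
  obtain ⟨p, hcop, happ⟩ := hα.exists_isCoprime_abs_mul_sub_lt n hqn
  obtain ⟨y, hy, hwalk⟩ := exists_walk_eq_sum_squareWave_slots hα hcop happ
  obtain ⟨k, rfl⟩ : 2 ∣ qn := by
    have heven := even_walk_sub α 0 qn
    rw [h0, zero_sub, even_neg, Int.even_coe_nat] at heven
    exact heven.two_dvd
  rw [hwalk]
  exact sum_squareWave_of_mem_slots k y (fun s hs ↦ by exact_mod_cast hy s hs) θ

/-- If `ω(0, q_n) = 0` then `ω(θ, q_n) ∈ {0, 2, -2}` for every `θ ∈ [0,1)`. -/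
theorem walk_translation_even_case (α : ℝ) (hα : Irrational α)
    (hα01 : α ∈ Set.Ioo (0 : ℝ) 1) (n : ℕ) (qn : ℕ)
    (hqn : (qn : ℝ) = (GenContFract.of α).dens n)
    (h0 : walk α 0 qn = 0) (θ : ℝ) (hθ : θ ∈ Set.Ico (0 : ℝ) 1) :
    walk α θ qn = 0 ∨ walk α θ qn = 2 ∨ walk α θ qn = -2 :=
  walk_translation_even_case_general α hα n qn hqn h0 θ
end

section
/- Let α ∈ (0,1) be irrational with best approximation denominators q_n and ω(θ, m) = Σ_{i=1}^m z_i(θ) where z_i(θ) = ±1 according to whether {θ + iα} ∈ [0,1/2) or [1/2,1). If ω(0, q_n) = 1, then for every θ ∈ [0,1), ω(θ, q_n) ∈ {1, -1, 3, -3}. -/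
open Finset

lemma walk_eq_two_mul_card_sub (α θ : ℝ) (m : ℕ) :
    walk α θ m = 2 * #{i ∈ Icc 1 m | Int.fract (θ + (i : ℕ) * α) < 1 / 2} - m := by
  have hcode : ∀ i, zCode α θ i =
      2 * (if Int.fract (θ + i * α) < 1 / 2 then 1 else 0) - 1 := fun i => by
    unfold zCode; split_ifs <;> norm_num
  simp only [walk, hcode, sum_sub_distrib, ← mul_sum, sum_boole, sum_const, Nat.card_Icc,
    Nat.add_sub_cancel, nsmul_eq_mul, mul_one]

lemma walk_modEq_two (α θ : ℝ) (m : ℕ) : walk α θ m ≡ m [ZMOD 2] := by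
  rw [walk_eq_two_mul_card_sub, Int.modEq_iff_dvd]
  exact ⟨m - #{i ∈ Icc 1 m | Int.fract (θ + (i : ℕ) * α) < 1 / 2}, by ring⟩

lemma Int.fract_lt_half_of_mem_Ico {q ℓ : ℕ} {y : ℝ}
    (hy : y ∈ Set.Ico (ℓ / q : ℝ) ((ℓ + 2) / q)) (hℓ : 2 * ℓ + 4 ≤ q) :
    Int.fract y < 1 / 2 := by
  have hq : (0 : ℝ) < q := by exact_mod_cast (show 0 < q by omega)
  have hℓ' : (2 : ℝ) * ℓ + 4 ≤ q := by exact_mod_cast hℓ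
  have hy_nonneg : 0 ≤ y := le_trans (by positivity) hy.1
  have hy_lt : y < 1 / 2 := hy.2.trans_le <| by rw [div_le_div_iff₀ hq two_pos]; linarith
  rwa [Int.fract_eq_self.mpr ⟨hy_nonneg, by linarith⟩]

lemma Int.half_le_fract_of_mem_Ico {q ℓ : ℕ} {y : ℝ}
    (hy : y ∈ Set.Ico (ℓ / q : ℝ) ((ℓ + 2) / q)) (hℓ₁ : q ≤ 2 * ℓ) (hℓ₂ : ℓ + 2 ≤ q) :
    1 / 2 ≤ Int.fract y := by
  have hq : (0 : ℝ) < q := by exact_mod_cast (show 0 < q by omega)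
  have hℓ₁' : (q : ℝ) ≤ 2 * ℓ := by exact_mod_cast hℓ₁
  have hℓ₂' : (ℓ : ℝ) + 2 ≤ q := by exact_mod_cast hℓ₂
  have hy_ge : 1 / 2 ≤ y := le_trans (by rw [div_le_div_iff₀ two_pos hq]; linarith) hy.1
  have hy_lt : y < 1 := hy.2.trans_le <| by rwa [div_le_one hq]
  rwa [Int.fract_eq_self.mpr ⟨by linarith, hy_lt⟩]

lemma card_filter_comp_eq_of_bijOn {ι : Type*} {T : Finset ι} {q : ℕ} {ℓ : ι → ℕ}
    (hℓ : Set.BijOn ℓ T (range q)) (P : ℕ → Prop) [DecidablePred P] :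
    #{i ∈ T | P (ℓ i)} = #{j ∈ range q | P j} := by
  refine card_nbij ℓ (fun i hi => ?_) (hℓ.injOn.mono (coe_subset.2 (filter_subset _ _)))
    (fun j hj => ?_)
  · rw [coe_filter] at hi ⊢
    exact ⟨hℓ.mapsTo hi.1, hi.2⟩
  · rw [coe_filter] at hj
    obtain ⟨i, hi, rfl⟩ := hℓ.surjOn hj.1
    exact ⟨i, by simpa using ⟨hi, hj.2⟩, rfl⟩

lemma abs_two_mul_card_fract_lt_half_sub_le {ι : Type*} {T : Finset ι} {q : ℕ} {ℓ : ι → ℕ}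
    (hℓ : Set.BijOn ℓ T (range q)) {y : ι → ℝ}
    (hy : ∀ i ∈ T, y i ∈ Set.Ico (ℓ i / q : ℝ) ((ℓ i + 2) / q)) :
    |2 * (#{i ∈ T | Int.fract (y i) < 1 / 2} : ℤ) - q| ≤ 3 := by
  have hT : #T = q := by simpa using card_filter_comp_eq_of_bijOn hℓ (fun _ => True)
  have hlow : (q - 2) / 2 ≤ #{i ∈ T | Int.fract (y i) < 1 / 2} := calc
    (q - 2) / 2 = #{j ∈ range q | 2 * j + 4 ≤ q} := by
      rw [← card_range ((q - 2) / 2)]; congr 1; ext j; simp only [mem_filter, mem_range]; omega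
    _ = #{i ∈ T | 2 * ℓ i + 4 ≤ q} := (card_filter_comp_eq_of_bijOn hℓ _).symm
    _ ≤ _ := card_le_card fun i hi => by
      simp only [mem_filter] at hi ⊢
      exact ⟨hi.1, Int.fract_lt_half_of_mem_Ico (hy i hi.1) hi.2⟩
  have hhigh : q - 1 - (q + 1) / 2 ≤ #{i ∈ T | ¬Int.fract (y i) < 1 / 2} := calc
    q - 1 - (q + 1) / 2 = #{j ∈ range q | q ≤ 2 * j ∧ j + 2 ≤ q} := by
      rw [← Nat.card_Ico]; congr 1; ext j; simp only [mem_filter, mem_range, mem_Ico]; omega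
    _ = #{i ∈ T | q ≤ 2 * ℓ i ∧ ℓ i + 2 ≤ q} := (card_filter_comp_eq_of_bijOn hℓ _).symm
    _ ≤ _ := card_le_card fun i hi => by
      simp only [mem_filter, not_lt] at hi ⊢
      exact ⟨hi.1, Int.half_le_fract_of_mem_Ico (hy i hi.1) hi.2.1 hi.2.2⟩
  have hsplit := card_filter_add_card_filter_not (s := T) (fun i => Int.fract (y i) < 1 / 2)
  rw [abs_le]
  omega

lemma exists_int_sub_div_add_mul_mem_Ico {q : ℕ} (hq : 0 < q) {δ : ℝ} (hδ : |δ| ≤ 1 / q ^ 2)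
    (θ : ℝ) : ∃ c : ℤ, ∀ i ∈ Icc 1 q, θ - c / q + i * δ ∈ Set.Ico (0 : ℝ) (2 / q) := by
  have hq' : (0 : ℝ) < q := by exact_mod_cast hq
  have hiδ : ∀ i ∈ Icc 1 q, |(i : ℝ) * δ| ≤ 1 / q := fun i hi => calc
    |(i : ℝ) * δ| = i * |δ| := by rw [abs_mul, Nat.abs_cast]
    _ ≤ q * (1 / q ^ 2) := by
      gcongr
      exact_mod_cast (mem_Icc.1 hi).2
    _ = 1 / q := by field_simp
  have hθ : θ - ⌊q * θ⌋ / q = Int.fract (q * θ) / q := by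
    rw [Int.fract, sub_div, mul_div_cancel_left₀ _ hq'.ne']
  have hfract : Int.fract (q * θ) / q < 1 / q := by
    gcongr; exact Int.fract_lt_one _
  have hfract₀ : 0 ≤ Int.fract (q * θ) / q := by positivity
  have htwo : 2 / (q : ℝ) = 1 / q + 1 / q := by ring
  -- the sign of `δ` decides on which side of `θ` the grid point `c / q` must lie
  rcases le_or_gt 0 δ with hδ₀ | hδ₀
  · refine ⟨⌊q * θ⌋, fun i hi => ?_⟩
    have := abs_le.1 (hiδ i hi)
    have : 0 ≤ (i : ℝ) * δ := by positivity
    exact ⟨by linarith, by linarith⟩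
  · refine ⟨⌊q * θ⌋ - 1, fun i hi => ?_⟩
    have := abs_le.1 (hiδ i hi)
    have : (i : ℝ) * δ ≤ 0 := mul_nonpos_of_nonneg_of_nonpos (by positivity) hδ₀.le
    have hθ' : θ - ((⌊q * θ⌋ - 1 : ℤ) : ℝ) / q = Int.fract (q * θ) / q + 1 / q := by
      rw [← hθ]; push_cast; ring
    rw [hθ']
    exact ⟨by linarith, by linarith⟩

lemma bijOn_toNat_mul_add_emod {p : ℤ} {q : ℕ} (hpq : IsCoprime p q) (c : ℤ) :
    Set.BijOn (fun i : ℕ => ((i * p + c) % q).toNat) (Icc 1 q) (range q) := by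
  have hmaps : Set.MapsTo (fun i : ℕ => ((i * p + c) % q).toNat) (Icc 1 q) (range q) :=
    fun i hi => by
      have hq : (0 : ℤ) < q := by have := (mem_Icc.1 hi); omega
      have := Int.emod_lt_of_pos (i * p + c) hq
      simp only [coe_range, Set.mem_Iio]
      omega
  have hinj : Set.InjOn (fun i : ℕ => ((i * p + c) % q).toNat) (Icc 1 q) := by
    intro i hi j hj hij
    rw [coe_Icc, Set.mem_Icc] at hi hj
    have hq : (q : ℤ) ≠ 0 := by omega
    have hmod : i * p + c ≡ j * p + c [ZMOD q] := by
      have := Int.emod_nonneg (i * p + c) hq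
      have := Int.emod_nonneg (j * p + c) hq
      simp only at hij
      unfold Int.ModEq; omega
    have hdvd : (q : ℤ) ∣ (j - i : ℤ) * p := by
      rw [sub_mul, ← add_sub_add_right_eq_sub _ _ c]; exact hmod.dvd
    have := Int.eq_zero_of_abs_lt_dvd (hpq.symm.dvd_of_dvd_mul_right hdvd)
      (by rw [abs_lt]; omega)
    omega
  exact ⟨hmaps, hinj, surjOn_of_injOn_of_card_le _ hmaps hinj (by simp)⟩

theorem abs_walk_le_three {α : ℝ} {p : ℤ} {q : ℕ} (hpq : IsCoprime p q)
    (happrox : |α - p / q| ≤ 1 / q ^ 2) (θ : ℝ) : |walk α θ q| ≤ 3 := by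
  rcases Nat.eq_zero_or_pos q with rfl | hq
  · simp [walk]
  have hq' : (q : ℝ) ≠ 0 := by positivity
  obtain ⟨c, hc⟩ := exists_int_sub_div_add_mul_mem_Ico hq happrox θ
  -- `θ + i α` reduced modulo `1` so that it lies just above the grid point `ℓ i / q`
  set ℓ : ℕ → ℕ := fun i => ((i * p + c) % q).toNat with hℓ
  set y : ℕ → ℝ := fun i => θ + i * α - ((i * p + c) / q : ℤ) with hy
  have hy_sub : ∀ i, y i - ℓ i / q = θ - c / q + i * (α - p / q) := fun i => by
    have hℓi : (ℓ i : ℤ) = i * p + c - q * ((i * p + c) / q) := by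
      rw [hℓ, Int.toNat_of_nonneg (Int.emod_nonneg _ (by omega)), Int.emod_def]
    have hℓi' : (ℓ i : ℝ) = i * p + c - q * ((i * p + c) / q : ℤ) := by exact_mod_cast hℓi
    rw [hℓi', hy]
    field_simp
    ring
  have hy_mem : ∀ i ∈ Icc 1 q, y i ∈ Set.Ico (ℓ i / q : ℝ) ((ℓ i + 2) / q) := fun i hi => by
    obtain ⟨h₀, h₂⟩ := hc i hi
    rw [← hy_sub] at h₀ h₂
    rw [add_div]
    exact ⟨by linarith, by linarith⟩
  have hfract : ∀ i : ℕ, Int.fract (θ + i * α) = Int.fract (y i) := fun i =>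
    (Int.fract_sub_intCast _ _).symm
  rw [walk_eq_two_mul_card_sub]
  simp_rw [hfract]
  exact abs_two_mul_card_fract_lt_half_sub_le (bijOn_toNat_mul_add_emod hpq c) hy_mem

namespace GenContFract

open GenContFract (of)

variable {K : Type*} [Field K] [LinearOrder K] [FloorRing K]

theorem of_contsAux_mem_bot (v : K) (m : ℕ) :
    ((of v).contsAux m).a ∈ (⊥ : Subring K) ∧ ((of v).contsAux m).b ∈ (⊥ : Subring K) := by
  induction m using Nat.twoStepInduction with
  | zero => simp [zeroth_contAux_eq_one_zero]
  | one => simp [first_contAux_eq_h_one, of_h_eq_floor, intCast_mem]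
  | more m ih₀ ih₁ =>
    cases hs : (of v).s.get? m with
    | none => rwa [contsAux_stable_step_of_terminated ((terminatedAt_iff_s_none).2 hs)]
    | some gp =>
      obtain ⟨hga, z, hgb⟩ := of_partNum_eq_one_and_exists_int_partDen_eq hs
      rw [contsAux_recurrence hs rfl rfl, hga, hgb]
      exact ⟨add_mem (mul_mem (intCast_mem _ z) ih₁.1) (mul_mem (one_mem _) ih₀.1),
        add_mem (mul_mem (intCast_mem _ z) ih₁.2) (mul_mem (one_mem _) ih₀.2)⟩

theorem of_nums_mem_bot (v : K) (n : ℕ) : (of v).nums n ∈ (⊥ : Subring K) := by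
  rw [num_eq_conts_a, nth_cont_eq_succ_nth_contAux]
  exact (of_contsAux_mem_bot v (n + 1)).1

theorem of_dens_mem_bot (v : K) (n : ℕ) : (of v).dens n ∈ (⊥ : Subring K) := by
  rw [den_eq_conts_b, nth_cont_eq_succ_nth_contAux]
  exact (of_contsAux_mem_bot v (n + 1)).2

end GenContFract

section

open GenContFract
open GenContFract (of)

theorem Irrational.not_terminatedAt_of {α : ℝ} (hα : Irrational α) (n : ℕ) :
    ¬(of α).TerminatedAt n := fun h => by
  obtain ⟨r, hr⟩ := (GenContFract.terminates_iff_rat α).1 ⟨n, h⟩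
  exact hα ⟨r, hr.symm⟩

theorem Irrational.exists_isCoprime_abs_sub_div_le_of_dens {α : ℝ} (hα : Irrational α) {n q : ℕ}
    (hq : (q : ℝ) = (of α).dens n) : ∃ p : ℤ, IsCoprime p q ∧ |α - p / q| ≤ 1 / q ^ 2 := by
  obtain ⟨p, hp⟩ := Subring.mem_bot.1 (of_nums_mem_bot α n)
  obtain ⟨p', hp'⟩ := Subring.mem_bot.1 (of_nums_mem_bot α (n + 1))
  obtain ⟨q', hq'⟩ := Subring.mem_bot.1 (of_dens_mem_bot α (n + 1))
  have hdet : p * q' - q * p' = (-1) ^ (n + 1) := by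
    have := SimpContFract.determinant (s := SimpContFract.of α) (hα.not_terminatedAt_of n)
    rw [SimpContFract.of, ← hp, ← hp', ← hq', ← hq] at this
    exact_mod_cast this
  refine ⟨p, ⟨(-1) ^ (n + 1) * q', -(-1) ^ (n + 1) * p', ?_⟩, ?_⟩
  · have hsq : ((-1 : ℤ) ^ (n + 1)) ^ 2 = 1 := by
      rw [← pow_mul]; exact Even.neg_one_pow ⟨n + 1, by ring⟩
    linear_combination (-1) ^ (n + 1) * hdet + hsq
  have hq_pos : (0 : ℝ) < q := by
    rw [hq]
    refine lt_of_lt_of_le ?_ (succ_nth_fib_le_of_nth_den (Or.inr (hα.not_terminatedAt_of (n - 1))))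
    exact_mod_cast Nat.fib_pos.2 n.succ_pos
  calc |α - p / q| = |α - (of α).convs n| := by rw [conv_eq_num_div_den, hp, hq]
    _ ≤ 1 / ((of α).dens n * (of α).dens (n + 1)) := abs_sub_convs_le (hα.not_terminatedAt_of n)
    _ ≤ 1 / q ^ 2 := by
      rw [← hq, sq]
      gcongr
      exact hq ▸ of_den_mono

end

theorem walk_translation_odd_case_general (α : ℝ) (hα : Irrational α)
    (n : ℕ) (qn : ℕ)
    (hqn : (qn : ℝ) = (GenContFract.of α).dens n)
    (h1 : walk α 0 qn = 1) (θ : ℝ) :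
    walk α θ qn = 1 ∨ walk α θ qn = -1 ∨ walk α θ qn = 3 ∨ walk α θ qn = -3 := by
  obtain ⟨p, hpq, happrox⟩ := hα.exists_isCoprime_abs_sub_div_le_of_dens hqn
  have hbound := abs_le.1 (abs_walk_le_three hpq happrox θ)
  have hparity : walk α θ qn ≡ walk α 0 qn [ZMOD 2] :=
    (walk_modEq_two α θ qn).trans (walk_modEq_two α 0 qn).symm
  rw [h1, Int.ModEq] at hparity
  omega

/-- If `ω(0, q_n) = 1` then `ω(θ, q_n) ∈ {1, -1, 3, -3}` for every `θ ∈ [0,1)`. -/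
theorem walk_translation_odd_case (α : ℝ) (hα : Irrational α)
    (hα01 : α ∈ Set.Ioo (0 : ℝ) 1) (n : ℕ) (qn : ℕ)
    (hqn : (qn : ℝ) = (GenContFract.of α).dens n)
    (h1 : walk α 0 qn = 1) (θ : ℝ) (hθ : θ ∈ Set.Ico (0 : ℝ) 1) :
    walk α θ qn = 1 ∨ walk α θ qn = -1 ∨ walk α θ qn = 3 ∨ walk α θ qn = -3 :=
  walk_translation_odd_case_general α hα n qn hqn h1 θ
end
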